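/- arXiv:2401.11465 — 2 statements merged into one kernel-verified Lean document; each statement's English description precedes it below -/
import Mathlib

section
/- Let K ⊆ ℝ be Borel, f : K → ℝ Borel measurable, and let A, B ⊆ K be Borel with A ∩ B = ∅. If the Hausdorff integrals of f over A, over B, and over A ∪ B all exist, then (H)∫_{A∪B} f = (H)∫_A f + (H)∫_B f, where + is the pair addition. -/
open MeasureTheory Filter Topology
open scoped ENNReal

/-- The pair addition: the pair with the larger first coordinate wins; if the first
coordinates agree, the second coordinates are added. -/
noncomputable def pAdd {α β : Type*} [LinearOrder α] [Add β] (a b : α × β) : α × β :=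
  if a.1 < b.1 then b else if b.1 < a.1 then a else (a.1, a.2 + b.2)

/-- D_f^L = {x ∈ L : f(x) ≠ 0}. -/
def HD (L : Set ℝ) (f : ℝ → ℝ) : Set ℝ := {x ∈ L | f x ≠ 0}

/-- The Hausdorff dimension of D_f^L. -/
noncomputable def Hdim (L : Set ℝ) (f : ℝ → ℝ) : ℝ≥0∞ := dimH (HD L f)

/-- ∫_{D_f^L} f⁺ dμ^d, where d = dim_H D_f^L. -/
noncomputable def HIntPos (L : Set ℝ) (f : ℝ → ℝ) : ℝ≥0∞ :=
  ∫⁻ x in HD L f, ENNReal.ofReal (f x) ∂(μH[(Hdim L f).toReal])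

/-- ∫_{D_f^L} f⁻ dμ^d, where d = dim_H D_f^L. -/
noncomputable def HIntNeg (L : Set ℝ) (f : ℝ → ℝ) : ℝ≥0∞ :=
  ∫⁻ x in HD L f, ENNReal.ofReal (-f x) ∂(μH[(Hdim L f).toReal])

/-- The extended-real integral ∫_{D_f^L} f dμ^d exists (is not ∞ − ∞). -/
def HIntExists (L : Set ℝ) (f : ℝ → ℝ) : Prop := HIntPos L f ≠ ⊤ ∨ HIntNeg L f ≠ ⊤

/-- f is Hausdorff-integrable on L: the integral exists and is finite. -/
def HIntegrable (L : Set ℝ) (f : ℝ → ℝ) : Prop := HIntPos L f ≠ ⊤ ∧ HIntNeg L f ≠ ⊤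

/-- The value ∫_{D_f^L} f dμ^d ∈ [-∞,+∞]. -/
noncomputable def HIntVal (L : Set ℝ) (f : ℝ → ℝ) : EReal :=
  (HIntPos L f : EReal) - (HIntNeg L f : EReal)

/-- The Hausdorff integral (H)∫_L f = (dim_H D_f^L, ∫_{D_f^L} f dμ^{dim_H D_f^L}). -/
noncomputable def HInt (L : Set ℝ) (f : ℝ → ℝ) : ℝ≥0∞ × EReal := (Hdim L f, HIntVal L f)

/-!
If the two pieces have different dimensions, the lower-dimensional one is null for the Hausdorff
measure of the larger dimension, so only the other piece contributes. If the dimensions agree,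
both integrals are taken against the same measure, and the Lebesgue integral is additive over
disjoint measurable sets.
-/

lemma hausdorffMeasure_toReal_eq_zero_of_dimH_lt {X : Type*} [EMetricSpace X] [MeasurableSpace X]
    [BorelSpace X] {s : Set X} {d : ℝ≥0∞} (hd : d ≠ ⊤) (h : dimH s < d) :
    μH[d.toReal] s = 0 := by
  lift d to NNReal using hd
  exact hausdorffMeasure_of_dimH_lt h

section PairAddition

variable {α β : Type*} [LinearOrder α] [Add β] {a b : α × β}

lemma pAdd_of_lt (h : a.1 < b.1) : pAdd a b = b := by
  simp [pAdd, h]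

lemma pAdd_of_gt (h : b.1 < a.1) : pAdd a b = a := by
  simp [pAdd, h, h.not_gt]

lemma pAdd_of_eq (h : a.1 = b.1) : pAdd a b = (a.1, a.2 + b.2) := by
  simp [pAdd, h]

end PairAddition

section HausdorffIntegral

variable {A B : Set ℝ} {f : ℝ → ℝ}

lemma HD_union : HD (A ∪ B) f = HD A f ∪ HD B f := by
  ext x; simp [HD, or_and_right]

lemma measurableSet_HD (hA : MeasurableSet A) (hf : Measurable f) : MeasurableSet (HD A f) :=
  hA.inter (hf (measurableSet_singleton 0).compl)

lemma disjoint_HD (h : Disjoint A B) : Disjoint (HD A f) (HD B f) :=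
  h.mono (Set.sep_subset _ _) (Set.sep_subset _ _)

lemma Hdim_union : Hdim (A ∪ B) f = max (Hdim A f) (Hdim B f) := by
  rw [Hdim, HD_union, dimH_union, Hdim, Hdim]

lemma Hdim_ne_top (A : Set ℝ) (f : ℝ → ℝ) : Hdim A f ≠ ⊤ :=
  ((dimH_mono (Set.subset_univ _)).trans_eq Real.dimH_univ |>.trans_lt ENNReal.one_lt_top).ne

lemma HInt_union_of_Hdim_lt (hlt : Hdim A f < Hdim B f) : HInt (A ∪ B) f = HInt B f := by
  have hdim : Hdim (A ∪ B) f = Hdim B f := by rw [Hdim_union, max_eq_right hlt.le]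
  have hae : HD (A ∪ B) f =ᵐ[μH[(Hdim B f).toReal]] HD B f := by
    rw [HD_union]
    exact union_ae_eq_right_of_ae_eq_empty
      (ae_eq_empty.mpr (hausdorffMeasure_toReal_eq_zero_of_dimH_lt (Hdim_ne_top B f) hlt))
  simp only [HInt, HIntVal, HIntPos, HIntNeg, hdim, setLIntegral_congr hae]

lemma setLIntegral_HD_union (hf : Measurable f) (hB : MeasurableSet B) (hAB : Disjoint A B)
    (μ : Measure ℝ) (g : ℝ → ℝ≥0∞) :
    ∫⁻ x in HD (A ∪ B) f, g x ∂μ = ∫⁻ x in HD A f, g x ∂μ + ∫⁻ x in HD B f, g x ∂μ := by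
  rw [HD_union]
  exact lintegral_union (measurableSet_HD hB hf) (disjoint_HD hAB)

/-- In `EReal`, `⊤ - ⊤ = ⊥` and `⊥` absorbs sums, so `(a + b) - (c + d) = (a - c) + (b - d)` holds
for all `ℝ≥0∞`-valued `a b c d`, without any finiteness condition. -/
lemma HInt_union_of_Hdim_eq (hf : Measurable f) (hB : MeasurableSet B) (hAB : Disjoint A B)
    (heq : Hdim A f = Hdim B f) : HInt (A ∪ B) f = (Hdim A f, HIntVal A f + HIntVal B f) := by
  have hdim : Hdim (A ∪ B) f = Hdim A f := by rw [Hdim_union, heq, max_self]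
  simp only [HInt, HIntVal, HIntPos, HIntNeg, hdim, setLIntegral_HD_union hf hB hAB, ← heq,
    EReal.coe_ennreal_add]
  exact congrArg _ (EReal.add_sub_add_comm (.inl (EReal.coe_ennreal_ne_bot _))
    (.inr (EReal.coe_ennreal_ne_bot _)))

end HausdorffIntegral

theorem hInt_union_general (A B : Set ℝ) (f : ℝ → ℝ)
    (hf : Measurable f)
    (hB : MeasurableSet B)
    (hdisj : A ∩ B = ∅) :
    HInt (A ∪ B) f = pAdd (HInt A f) (HInt B f) := by
  have hAB : Disjoint A B := Set.disjoint_iff_inter_eq_empty.mpr hdisj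
  rcases lt_trichotomy (Hdim A f) (Hdim B f) with hlt | heq | hgt
  · rw [HInt_union_of_Hdim_lt hlt, pAdd_of_lt hlt]
  · rw [HInt_union_of_Hdim_eq hf hB hAB heq, pAdd_of_eq heq]; rfl
  · rw [Set.union_comm, HInt_union_of_Hdim_lt hgt, pAdd_of_gt hgt]

theorem hInt_union (K A B : Set ℝ) (f : ℝ → ℝ)
    (hK : MeasurableSet K) (hf : Measurable f)
    (hA : MeasurableSet A) (hB : MeasurableSet B)
    (hAK : A ⊆ K) (hBK : B ⊆ K) (hdisj : A ∩ B = ∅)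
    (heA : HIntExists A f) (heB : HIntExists B f) (heAB : HIntExists (A ∪ B) f) :
    HInt (A ∪ B) f = pAdd (HInt A f) (HInt B f) :=
  hInt_union_general A B f hf hB hdisj
end

section
/- Let K ⊆ ℝ be Borel. If f, g : K → ℝ are Hausdorff-integrable and 0 ≤ f ≤ g, then (H)∫_K f ≤ (H)∫_K g in the lexicographic order. -/
open MeasureTheory Filter Topology
open scoped ENNReal

/-! Since `0 ≤ f ≤ g` on `K`, the support `D_f` lies inside `D_g`, so `dim_H D_f ≤ dim_H D_g`.
If the dimensions differ the pairs are already ordered; if they agree, both integrals are taken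
against the same Hausdorff measure, both negative parts vanish, and the positive part of `f`
over the smaller set is at most that of `g` over the larger one. -/

section LIntegral

variable {α : Type*} [MeasurableSpace α] {μ : Measure α}

theorem setLIntegral_mono_of_subset_of_le_on {s t t' : Set α} {f g : α → ℝ≥0∞}
    (hs : MeasurableSet s) (hts : t ⊆ s) (htt' : t ⊆ t') (hfg : ∀ x ∈ s, f x ≤ g x) :
    ∫⁻ x in t, f x ∂μ ≤ ∫⁻ x in t', g x ∂μ :=
  calc ∫⁻ x in t, f x ∂μ ≤ ∫⁻ x in t, g x ∂μ :=
        lintegral_mono_ae <| ae_mono (Measure.restrict_mono hts le_rfl)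
          ((ae_restrict_mem hs).mono hfg)
    _ ≤ ∫⁻ x in t', g x ∂μ := lintegral_mono_set htt'

end LIntegral

section HausdorffIntegral

variable {K : Set ℝ} {f g : ℝ → ℝ}

theorem HD_subset_of_nonneg_of_le (hf0 : ∀ x ∈ K, 0 ≤ f x) (hfg : ∀ x ∈ K, f x ≤ g x) :
    HD K f ⊆ HD K g := fun x ⟨hxK, hfx⟩ =>
  ⟨hxK, fun hgx => hfx (le_antisymm (hgx ▸ hfg x hxK) (hf0 x hxK))⟩

theorem HIntNeg_eq_zero_of_nonneg (hK : MeasurableSet K) (hf0 : ∀ x ∈ K, 0 ≤ f x) :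
    HIntNeg K f = 0 := by
  refine nonpos_iff_eq_zero.1 ?_
  calc HIntNeg K f ≤ ∫⁻ _ in HD K f, 0 ∂(μH[(Hdim K f).toReal]) :=
        setLIntegral_mono_of_subset_of_le_on hK (fun _ hx => hx.1) le_rfl
          fun x hx => (ENNReal.ofReal_eq_zero.2 (neg_nonpos.2 (hf0 x hx))).le
    _ = 0 := lintegral_zero

theorem HIntVal_eq_HIntPos_of_nonneg (hK : MeasurableSet K) (hf0 : ∀ x ∈ K, 0 ≤ f x) :
    HIntVal K f = HIntPos K f := by
  rw [HIntVal, HIntNeg_eq_zero_of_nonneg hK hf0, EReal.coe_ennreal_zero, sub_zero]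

theorem HIntPos_le_of_Hdim_eq (hK : MeasurableSet K) (hfg : ∀ x ∈ K, f x ≤ g x)
    (hD : HD K f ⊆ HD K g) (hdim : Hdim K f = Hdim K g) :
    HIntPos K f ≤ HIntPos K g := by
  rw [HIntPos, HIntPos, hdim]
  exact setLIntegral_mono_of_subset_of_le_on hK (fun _ hx => hx.1) hD
    fun x hx => ENNReal.ofReal_le_ofReal (hfg x hx)

end HausdorffIntegral

theorem hInt_mono_of_nonneg_general (K : Set ℝ) (f g : ℝ → ℝ)
    (hK : MeasurableSet K)
    (hf0 : ∀ x ∈ K, 0 ≤ f x) (hfg : ∀ x ∈ K, f x ≤ g x) :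
    toLex (HInt K f) ≤ toLex (HInt K g) := by
  have hD : HD K f ⊆ HD K g := HD_subset_of_nonneg_of_le hf0 hfg
  have hg0 : ∀ x ∈ K, 0 ≤ g x := fun x hx => (hf0 x hx).trans (hfg x hx)
  rw [Prod.Lex.toLex_le_toLex]
  rcases (dimH_mono hD : Hdim K f ≤ Hdim K g).lt_or_eq with hlt | heq
  · exact Or.inl hlt
  · refine Or.inr ⟨heq, ?_⟩
    change HIntVal K f ≤ HIntVal K g
    rw [HIntVal_eq_HIntPos_of_nonneg hK hf0, HIntVal_eq_HIntPos_of_nonneg hK hg0]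
    exact EReal.coe_ennreal_le_coe_ennreal_iff.2 (HIntPos_le_of_Hdim_eq hK hfg hD heq)

theorem hInt_mono_of_nonneg (K : Set ℝ) (f g : ℝ → ℝ)
    (hK : MeasurableSet K) (hf : Measurable f) (hg : Measurable g)
    (hf0 : ∀ x ∈ K, 0 ≤ f x) (hfg : ∀ x ∈ K, f x ≤ g x)
    (hfi : HIntegrable K f) (hgi : HIntegrable K g) :
    toLex (HInt K f) ≤ toLex (HInt K g) :=
  hInt_mono_of_nonneg_general K f g hK hf0 hfg
end
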